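/- arXiv:2006.10062 — 5 statements merged into one kernel-verified Lean document; each statement's English description precedes it below -/
import Mathlib

section
/- Let Γ be a family of linear maps on an algebra A indexed by subsets of a finite set Λ, satisfying Γ_X ∘ Γ_Y = Γ_{X∩Y} and Γ_Λ = id. Define Φ(Z) = Σ_{X ⊆ Z} (-1)^{|Z|-|X|} Γ_X(H) for a fixed H ∈ A. Then for any Y ⊆ Λ and Z ⊆ Λ with Z not contained in Y, Γ_Y(Φ(Z)) = 0. -/
/-!
Pick `a ∈ Z \ Y`. By the semigroup law, `Γ_Y Φ(Z)` is the signed sum of `Γ_{Y ∩ X} H` over `X ⊆ Z`,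
and these terms do not change when `a` is added to `X`. Pairing `X` with `insert a X` for
`X ⊆ Z \ {a}` changes `|X|` by one, so the paired terms cancel.
-/

open Finset

theorem Finset.sum_powerset_neg_one_pow_card_sub_smul_eq_zero {α M : Type*} [DecidableEq α]
    [AddCommGroup M] {Z : Finset α} {a : α} (ha : a ∈ Z) (f : Finset α → M)
    (hf : ∀ X, f (insert a X) = f X) :
    ∑ X ∈ Z.powerset, (-1 : ℤ) ^ (#Z - #X) • f X = 0 := by
  rw [← insert_erase ha, sum_powerset_insert (notMem_erase a Z), ← sum_add_distrib]
  refine sum_eq_zero fun X hX => ?_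
  have hXa : a ∉ X := fun h => notMem_erase a Z (mem_powerset.mp hX h)
  have hcard : #X ≤ #(Z.erase a) := card_le_card (mem_powerset.mp hX)
  rw [hf, card_insert_of_notMem (notMem_erase a Z), card_insert_of_notMem hXa,
    Nat.add_sub_add_right, Nat.sub_add_comm hcard, pow_succ, mul_neg_one, neg_smul,
    neg_add_cancel]

theorem canonical_potential_canonical_form_general {α : Type*} [DecidableEq α]
    {A : Type*} [AddCommGroup A] [Module ℂ A]
    (Γ : Finset α → A →ₗ[ℂ] A)
    (hcomp : ∀ X Y : Finset α, (Γ X).comp (Γ Y) = Γ (X ∩ Y))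
    (H : A)
    (Y Z : Finset α) (hnot : ¬ Z ⊆ Y) :
    Γ Y (∑ X ∈ Z.powerset, (-1 : ℤ) ^ (Z.card - X.card) • Γ X H) = 0 := by
  obtain ⟨a, haZ, haY⟩ := not_subset.mp hnot
  have hΓY : ∀ X, Γ Y (Γ X H) = Γ (Y ∩ X) H := fun X => by
    rw [← LinearMap.comp_apply, hcomp]
  simp only [map_sum, map_zsmul, hΓY]
  exact sum_powerset_neg_one_pow_card_sub_smul_eq_zero haZ (fun X => Γ (Y ∩ X) H)
    fun X => by rw [inter_insert_of_notMem haY]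

theorem canonical_potential_canonical_form {α : Type*} [DecidableEq α]
    {A : Type*} [AddCommGroup A] [Module ℂ A] (Λ : Finset α)
    (Γ : Finset α → A →ₗ[ℂ] A)
    (hcomp : ∀ X Y : Finset α, (Γ X).comp (Γ Y) = Γ (X ∩ Y))
    (hΛ : Γ Λ = LinearMap.id) (H : A)
    (Y Z : Finset α) (hY : Y ⊆ Λ) (hZ : Z ⊆ Λ) (hnot : ¬ Z ⊆ Y) :
    Γ Y (∑ X ∈ Z.powerset, (-1 : ℤ) ^ (Z.card - X.card) • Γ X H) = 0 :=
  canonical_potential_canonical_form_general Γ hcomp H Y Z hnot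
end

section
/- Under the hypotheses of the canonical-form construction, if H = Σ_{Y ⊆ Λ, |Y| ≤ k} Φ₀(Y) where each Φ₀(Y) satisfies Γ_X(Φ₀(Y)) = Γ_{X∩Y}(Φ₀(Y)) for all X ⊆ Λ, then the canonical potential Φ̂(Z) = Σ_{X ⊆ Z} (-1)^{|Z|-|X|} Γ_X(H) vanishes whenever |Z| > k. -/
/-!
By linearity it suffices to treat one term `Φ₀ Y` of `H`, with `#Y ≤ k < #Z`. Then
`X ↦ Γ X (Φ₀ Y)` depends only on `X ∩ Y`, and an alternating sum over the subsets of `Z` of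
such a function vanishes as soon as some `z ∈ Z` lies outside `Y`.
-/

open Finset

namespace Finset

variable {α M : Type*} [DecidableEq α] [AddCommGroup M]

/-- Splitting `Z = insert z (Z.erase z)`, the terms for `X` and `insert z X` cancel in pairs. -/
theorem sum_powerset_neg_one_pow_card_sub_smul_eq_zero_s6 {Z : Finset α} {z : α} (hz : z ∈ Z)
    (g : Finset α → M) (hg : ∀ X ⊆ Z.erase z, g (insert z X) = g X) :
    ∑ X ∈ Z.powerset, (-1 : ℤ) ^ (#Z - #X) • g X = 0 := by
  rw [← insert_erase hz, sum_powerset_insert (notMem_erase z Z), ← sum_add_distrib,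
    card_insert_of_notMem (notMem_erase z Z)]
  refine sum_eq_zero fun X hX => ?_
  have hXZ : X ⊆ Z.erase z := mem_powerset.mp hX
  have hzX : z ∉ X := fun h => notMem_erase z Z (hXZ h)
  have hcard : #X ≤ #(Z.erase z) := card_le_card hXZ
  rw [hg X hXZ, card_insert_of_notMem hzX, Nat.add_sub_add_right, Nat.sub_add_comm hcard,
    pow_succ, mul_neg_one, neg_smul, neg_add_cancel]

theorem sum_powerset_neg_one_pow_card_sub_smul_eq_zero_of_eq_inter {Y Z : Finset α}
    (hZY : ¬ Z ⊆ Y) (g : Finset α → M) (hg : ∀ X ⊆ Z, g X = g (X ∩ Y)) :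
    ∑ X ∈ Z.powerset, (-1 : ℤ) ^ (#Z - #X) • g X = 0 := by
  obtain ⟨z, hzZ, hzY⟩ := not_subset.mp hZY
  refine sum_powerset_neg_one_pow_card_sub_smul_eq_zero_s6 hzZ g fun X hX => ?_
  have hXZ : X ⊆ Z := hX.trans (erase_subset z Z)
  rw [hg X hXZ, hg _ (insert_subset hzZ hXZ), insert_inter_of_notMem hzY]

end Finset

theorem canonical_potential_k_body_general {α : Type*} [DecidableEq α]
    {A : Type*} [AddCommGroup A] [Module ℂ A] (Λ : Finset α) (k : ℕ)
    (Γ : Finset α → A →ₗ[ℂ] A)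
    (Φ₀ : Finset α → A)
    (hsupp : ∀ X Y : Finset α, X ⊆ Λ → Y ⊆ Λ → Γ X (Φ₀ Y) = Γ (X ∩ Y) (Φ₀ Y))
    (H : A)
    (hH : H = ∑ Y ∈ Λ.powerset.filter (fun Y => Y.card ≤ k), Φ₀ Y)
    (Z : Finset α) (hZ : Z ⊆ Λ) (hZk : k < Z.card) :
    ∑ X ∈ Z.powerset, (-1 : ℤ) ^ (Z.card - X.card) • Γ X H = 0 := by
  subst hH
  simp_rw [map_sum, smul_sum]
  rw [sum_comm]
  refine sum_eq_zero fun Y hY => ?_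
  obtain ⟨hYΛ, hYk⟩ := mem_filter.mp hY
  have hZY : ¬ Z ⊆ Y := fun h => (card_le_card h).not_gt (hYk.trans_lt hZk)
  exact sum_powerset_neg_one_pow_card_sub_smul_eq_zero_of_eq_inter hZY (fun X => Γ X (Φ₀ Y))
    fun X hX => hsupp X Y (hX.trans hZ) (mem_powerset.mp hYΛ)

theorem canonical_potential_k_body {α : Type*} [DecidableEq α]
    {A : Type*} [AddCommGroup A] [Module ℂ A] (Λ : Finset α) (k : ℕ)
    (Γ : Finset α → A →ₗ[ℂ] A)
    (hcomp : ∀ X Y : Finset α, (Γ X).comp (Γ Y) = Γ (X ∩ Y))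
    (hΛ : Γ Λ = LinearMap.id)
    (Φ₀ : Finset α → A)
    (hk : ∀ Y : Finset α, k < Y.card → Φ₀ Y = 0)
    (hsupp : ∀ X Y : Finset α, X ⊆ Λ → Y ⊆ Λ → Γ X (Φ₀ Y) = Γ (X ∩ Y) (Φ₀ Y))
    (H : A)
    (hH : H = ∑ Y ∈ Λ.powerset.filter (fun Y => Y.card ≤ k), Φ₀ Y)
    (Z : Finset α) (hZ : Z ⊆ Λ) (hZk : k < Z.card) :
    ∑ X ∈ Z.powerset, (-1 : ℤ) ^ (Z.card - X.card) • Γ X H = 0 :=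
  canonical_potential_k_body_general Λ k Γ Φ₀ hsupp H hH Z hZ hZk
end

section
/- Fix self-adjoint matrix H and matrices A, B with [A,B]=0. If ‖[e^{iHt} A e^{−iHt}, B]‖ ≤ h(t) for all t ≥ 0, where h is differentiable with h(0) = 0, then ‖[[H, A], B]‖ ≤ h'(0). -/
/-!
Differentiating `t ↦ [e^{tX} A e^{-tX}, B]` at `0` with `X = iH` gives `i [[H, A], B]`, and this
function vanishes at `0` because `A` and `B` commute. A function that vanishes at `0` and is
dominated in norm by `h` on `t > 0` has right derivative at most `h'(0)` in norm, as the slopes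
`‖g t‖ / t ≤ h t / t` show.
-/

open scoped Matrix.Norms.L2Operator

open Filter Set Topology NormedSpace

theorem norm_le_of_hasDerivWithinAt_Ioi_of_norm_le {E : Type*} [NormedAddCommGroup E]
    [NormedSpace ℝ E] {g : ℝ → E} {h : ℝ → ℝ} {g' : E} {h' : ℝ}
    (hg : HasDerivWithinAt g g' (Ioi 0) 0) (hh : HasDerivWithinAt h h' (Ioi 0) 0)
    (hg0 : g 0 = 0) (hh0 : h 0 = 0) (hle : ∀ᶠ t in 𝓝[>] 0, ‖g t‖ ≤ h t) : ‖g'‖ ≤ h' := by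
  have hg_slope := (hasDerivWithinAt_iff_tendsto_slope' self_notMem_Ioi).mp hg
  have hh_slope := (hasDerivWithinAt_iff_tendsto_slope' self_notMem_Ioi).mp hh
  refine le_of_tendsto_of_tendsto hg_slope.norm hh_slope ?_
  filter_upwards [hle, self_mem_nhdsWithin] with t hgh (ht : 0 < t)
  rw [slope_def_module, slope_def_field, hg0, hh0, sub_zero, sub_zero, sub_zero, norm_smul,
    Real.norm_of_nonneg (inv_nonneg.mpr ht.le), inv_mul_eq_div]
  exact div_le_div_of_nonneg_right hgh ht.le

section BanachAlgebra

variable {𝔸 : Type*} [NormedRing 𝔸] [NormedAlgebra ℝ 𝔸] [CompleteSpace 𝔸]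

theorem hasDerivAt_exp_smul_const_zero (X : 𝔸) :
    HasDerivAt (fun t : ℝ => exp (t • X)) X 0 := by
  simpa using hasDerivAt_exp_smul_const (𝕂 := ℝ) X 0

theorem hasDerivAt_exp_conj (X A : 𝔸) :
    HasDerivAt (fun t : ℝ => exp (t • X) * A * exp (t • -X)) (X * A - A * X) 0 := by
  refine (((hasDerivAt_exp_smul_const_zero X).mul_const A).mul
    (hasDerivAt_exp_smul_const_zero (-X))).congr_deriv ?_
  simp only [zero_smul, exp_zero, one_mul, mul_one, mul_neg, sub_eq_add_neg]

theorem hasDerivAt_commutator_exp_conj (X A B : 𝔸) :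
    HasDerivAt
      (fun t : ℝ => exp (t • X) * A * exp (t • -X) * B - B * (exp (t • X) * A * exp (t • -X)))
      ((X * A - A * X) * B - B * (X * A - A * X)) 0 :=
  ((hasDerivAt_exp_conj X A).mul_const B).sub ((hasDerivAt_exp_conj X A).const_mul B)

end BanachAlgebra

theorem double_commutator_bound_of_commutator_bound_general {n : Type*} [Fintype n] [DecidableEq n]
    (H A B : Matrix n n ℂ) (hAB : A * B = B * A)
    (h : ℝ → ℝ) (hh0 : h 0 = 0) (hhd : DifferentiableAt ℝ h 0)
    (hbound : ∀ t : ℝ, 0 ≤ t →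
      ‖(NormedSpace.exp ((Complex.I * t) • H) * A *
          NormedSpace.exp ((-(Complex.I * t)) • H)) * B -
        B * (NormedSpace.exp ((Complex.I * t) • H) * A *
          NormedSpace.exp ((-(Complex.I * t)) • H))‖ ≤ h t) :
    ‖(H * A - A * H) * B - B * (H * A - A * H)‖ ≤ deriv h 0 := by
  set X := Complex.I • H
  have hX : ∀ t : ℝ, (Complex.I * t) • H = t • X := fun t => by
    rw [mul_comm, mul_smul, Complex.coe_smul]
  have hX_neg : ∀ t : ℝ, (-(Complex.I * t)) • H = t • -X := fun t => by
    rw [neg_smul, smul_neg, hX]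
  simp only [hX, hX_neg] at hbound
  have hXA : X * A - A * X = Complex.I • (H * A - A * H) := by
    rw [smul_sub, smul_mul_assoc, mul_smul_comm]
  have hderiv_le := norm_le_of_hasDerivWithinAt_Ioi_of_norm_le
    (hasDerivAt_commutator_exp_conj X A B).hasDerivWithinAt hhd.hasDerivAt.hasDerivWithinAt
    (by simp [hAB]) hh0 (eventually_nhdsWithin_of_forall fun t ht => hbound t ht.le)
  rwa [hXA, smul_mul_assoc, mul_smul_comm, ← smul_sub, norm_smul, Complex.norm_I, one_mul]
    at hderiv_le

/-- If the commutator `‖[e^{iHt} A e^{-iHt}, B]‖` is bounded by `h(t)` for all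
`t ≥ 0`, with `h` differentiable at `0` and `h(0) = 0`, and `[A, B] = 0`, then
`‖[[H, A], B]‖ ≤ h'(0)`. -/
theorem double_commutator_bound_of_commutator_bound {n : Type*} [Fintype n] [DecidableEq n]
    (H A B : Matrix n n ℂ) (hH : H.IsHermitian) (hAB : A * B = B * A)
    (h : ℝ → ℝ) (hh0 : h 0 = 0) (hhd : DifferentiableAt ℝ h 0)
    (hbound : ∀ t : ℝ, 0 ≤ t →
      ‖(NormedSpace.exp ((Complex.I * t) • H) * A *
          NormedSpace.exp ((-(Complex.I * t)) • H)) * B -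
        B * (NormedSpace.exp ((Complex.I * t) • H) * A *
          NormedSpace.exp ((-(Complex.I * t)) • H))‖ ≤ h t) :
    ‖(H * A - A * H) * B - B * (H * A - A * H)‖ ≤ deriv h 0 :=
  double_commutator_bound_of_commutator_bound_general H A B hAB h hh0 hhd hbound
end

section
/- (Recursive bound on potential terms) Let Φ be a function from subsets of a finite set Λ to matrices with Φ(Z) = 0 whenever |Z| > k, and suppose that for every Z with |Z| ≥ 2 and every pair x ≠ y ∈ Z, ‖ Σ_{Z' ⊆ Z, x ∈ Z', y ∈ Z'} Φ(Z') ‖ ≤ ε. Then there is a constant m_k depending only on k (one may take m_k = 2^{k-2}) such that ‖Φ(Z)‖ ≤ m_k ε for all Z with |Z| ≥ 2. -/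
/-!
Fix `x ≠ y` in `Z`. The sums `S A = ∑_{{x, y} ⊆ Z' ⊆ A} Φ Z'` are the partial sums of `Φ`
over the Boolean interval `[{x, y}, Z]`, so Möbius inversion on that interval writes `Φ Z` as a
signed sum of the `2 ^ (#Z - 2)` values `S A`, each of norm at most `ε`. The `k`-body condition
makes `Φ Z = 0` as soon as `#Z > k`, and otherwise `2 ^ (#Z - 2) ≤ 2 ^ (k - 2)`.
-/

open scoped Matrix.Norms.L2Operator

open Finset

namespace Finset

variable {α M : Type*} [DecidableEq α]

theorem sum_Icc_neg_one_pow_card_sdiff {s t : Finset α} (hst : s ⊆ t) :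
    ∑ A ∈ Icc s t, (-1 : ℤ) ^ #(t \ A) = if s = t then 1 else 0 := by
  have hcompl :
      ∑ A ∈ Icc s t, (-1 : ℤ) ^ #(t \ A) = ∑ C ∈ (t \ s).powerset, (-1 : ℤ) ^ #C := by
    refine sum_nbij' (t \ ·) (t \ ·) ?_ ?_ ?_ ?_ fun _ _ => rfl
    · intro A hA
      exact mem_powerset.mpr (sdiff_subset_sdiff subset_rfl (mem_Icc.mp hA).1)
    · intro C hC
      have hCs : Disjoint s C :=
        (disjoint_of_subset_left (mem_powerset.mp hC) sdiff_disjoint).symm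
      exact mem_Icc.mpr ⟨subset_sdiff.mpr ⟨hst, hCs⟩, sdiff_subset⟩
    · intro A hA
      exact sdiff_sdiff_eq_self (mem_Icc.mp hA).2
    · intro C hC
      exact sdiff_sdiff_eq_self ((mem_powerset.mp hC).trans sdiff_subset)
  rw [hcompl, sum_powerset_neg_one_pow_card]
  exact if_congr (sdiff_eq_empty_iff_subset.trans ⟨hst.antisymm, fun h => h ▸ subset_rfl⟩)
    rfl rfl

/-- Möbius inversion on the Boolean interval `[s, t]`. -/
theorem sum_Icc_neg_one_pow_smul_sum_Icc [AddCommGroup M] (g : Finset α → M) {s t : Finset α}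
    (hst : s ⊆ t) :
    ∑ A ∈ Icc s t, (-1 : ℤ) ^ #(t \ A) • ∑ B ∈ Icc s A, g B = g t := by
  simp_rw [smul_sum]
  rw [sum_comm' (t' := Icc s t) (s' := fun B => Icc B t)]
  · simp_rw [← sum_smul]
    rw [sum_congr rfl fun B hB =>
      congrArg (· • g B) (sum_Icc_neg_one_pow_card_sdiff (mem_Icc.mp hB).2)]
    simp [ite_smul, hst]
  · intro A B
    simp only [mem_Icc]
    constructor
    · rintro ⟨⟨-, hAt⟩, hsB, hBA⟩
      exact ⟨⟨hBA, hAt⟩, hsB, hBA.trans hAt⟩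
    · rintro ⟨⟨hBA, hAt⟩, hsB, -⟩
      exact ⟨⟨hsB.trans hBA, hAt⟩, hsB, hBA⟩

theorem norm_le_of_norm_sum_Icc_le [SeminormedAddCommGroup M] (g : Finset α → M)
    {s t : Finset α} (hst : s ⊆ t) {ε : ℝ}
    (hg : ∀ A ∈ Icc s t, ‖∑ B ∈ Icc s A, g B‖ ≤ ε) :
    ‖g t‖ ≤ 2 ^ (#t - #s) * ε := by
  have hterm : ∀ A ∈ Icc s t, ‖(-1 : ℤ) ^ #(t \ A) • ∑ B ∈ Icc s A, g B‖ ≤ ε := by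
    intro A hA
    rcases neg_one_pow_eq_or ℤ #(t \ A) with h | h <;> simpa [h] using hg A hA
  calc ‖g t‖ = ‖∑ A ∈ Icc s t, (-1 : ℤ) ^ #(t \ A) • ∑ B ∈ Icc s A, g B‖ := by
        rw [sum_Icc_neg_one_pow_smul_sum_Icc g hst]
    _ ≤ ∑ _A ∈ Icc s t, ε := norm_sum_le_of_le _ hterm
    _ = 2 ^ (#t - #s) * ε := by
        rw [sum_const, card_Icc_finset hst, nsmul_eq_mul]
        push_cast
        rfl

theorem filter_powerset_mem_and_mem (A : Finset α) (x y : α) :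
    A.powerset.filter (fun Z => x ∈ Z ∧ y ∈ Z) = Icc {x, y} A := by
  ext Z
  simp [insert_subset_iff, and_comm]

end Finset

/-- Recursive bound on the terms of a `k`-body potential in canonical form:
if for every region `Z` and pair `x ≠ y ∈ Z` the sum of potential terms inside
`Z` containing both `x` and `y` has norm at most `ε`, then every individual
potential term on at least two sites is bounded by `2^(k-2) ε`. -/
theorem potential_terms_bound {α : Type*} [DecidableEq α] {n : Type*}
    [Fintype n] [DecidableEq n]
    (Λ : Finset α) (k : ℕ) (Φ : Finset α → Matrix n n ℂ) (ε : ℝ)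
    (hk : ∀ Z : Finset α, k < Z.card → Φ Z = 0)
    (hbound : ∀ Z : Finset α, Z ⊆ Λ → ∀ x ∈ Z, ∀ y ∈ Z, x ≠ y →
      ‖∑ Z' ∈ Z.powerset.filter (fun Z' => x ∈ Z' ∧ y ∈ Z'), Φ Z'‖ ≤ ε) :
    ∀ Z : Finset α, Z ⊆ Λ → 2 ≤ Z.card → ‖Φ Z‖ ≤ (2 : ℝ) ^ (k - 2) * ε := by
  intro Z hZΛ hcard
  obtain ⟨x, hx, y, hy, hxy⟩ := one_lt_card.mp hcard
  have hε : 0 ≤ ε := (norm_nonneg _).trans (hbound Z hZΛ x hx y hy hxy)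
  rcases le_or_gt #Z k with hZk | hkZ
  · have hxyZ : {x, y} ⊆ Z := insert_subset_iff.mpr ⟨hx, singleton_subset_iff.mpr hy⟩
    have hS : ∀ A ∈ Icc {x, y} Z, ‖∑ B ∈ Icc {x, y} A, Φ B‖ ≤ ε := by
      intro A hA
      obtain ⟨hxyA, hAZ⟩ := mem_Icc.mp hA
      rw [← filter_powerset_mem_and_mem]
      exact hbound A (hAZ.trans hZΛ) x (hxyA (by simp)) y (hxyA (by simp)) hxy
    calc ‖Φ Z‖ ≤ 2 ^ (#Z - #{x, y}) * ε := norm_le_of_norm_sum_Icc_le Φ hxyZ hS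
      _ ≤ 2 ^ (k - 2) * ε := by
        rw [card_pair hxy]
        gcongr
        norm_num
  · rw [hk Z hkZ, norm_zero]
    positivity
end

section
/- For a Hermitian matrix H and projections A = |x⟩⟨x|, B = |y⟩⟨y| onto distinct basis vectors, ‖[[H,A],B]‖ ≥ |⟨y|H|x⟩|. Consequently, if ‖[e^{iHt} A e^{−iHt}, B]‖ ≤ C t for small t ≥ 0, then |⟨y|H|x⟩| ≤ C. -/
open scoped Matrix.Norms.L2Operator
open NormedSpace

lemma entry_abs_le_l2_opNorm' {n : Type*} [Fintype n] [DecidableEq n] (M : Matrix n n ℂ) (i j : n) :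
    ‖M i j‖ ≤ ‖M‖ := by
  have hv : ‖(EuclideanSpace.single j (1:ℂ) : EuclideanSpace ℂ n)‖ = 1 := by
    simp [EuclideanSpace.norm_single]
  have h1 := M.l2_opNorm_mulVec (EuclideanSpace.single j (1:ℂ))
  rw [hv, mul_one] at h1
  set w := (EuclideanSpace.equiv n ℂ).symm (M.mulVec (EuclideanSpace.single j (1:ℂ))) with hw
  have hwi : w i = M i j := by
    show M.mulVec (EuclideanSpace.single j (1:ℂ)) i = M i j
    have : (EuclideanSpace.single j (1:ℂ) : n → ℂ) = Pi.single j 1 := rfl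
    rw [this, Matrix.mulVec_single]; simp
  calc ‖M i j‖ = ‖w i‖ := by rw [hwi]
    _ ≤ ‖w‖ := by
        rw [EuclideanSpace.norm_eq]
        have h2 : ‖w i‖ ^ 2 ≤ ∑ k, ‖w k‖ ^ 2 :=
          Finset.single_le_sum (fun k _ => sq_nonneg ‖w k‖) (Finset.mem_univ i)
        calc ‖w i‖ = Real.sqrt (‖w i‖ ^ 2) := (Real.sqrt_sq (norm_nonneg _)).symm
          _ ≤ _ := Real.sqrt_le_sqrt h2
    _ ≤ ‖M‖ := h1


/-- For a Hermitian matrix `H` and the rank-one projections `A = |x⟩⟨x|`,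
`B = |y⟩⟨y|` onto distinct basis vectors: `|⟨y|H|x⟩| ≤ ‖[[H,A],B]‖`, and
consequently if `‖[e^{iHt} A e^{-iHt}, B]‖ ≤ C t` for small `t ≥ 0`
then `|⟨y|H|x⟩| ≤ C`. -/
theorem matrix_element_bound_from_commutator {n : Type*} [Fintype n] [DecidableEq n]
    (H : Matrix n n ℂ) (hH : H.IsHermitian) (x y : n) (hxy : x ≠ y)
    (A : Matrix n n ℂ) (hA : A = Matrix.single x x 1)
    (B : Matrix n n ℂ) (hB : B = Matrix.single y y 1)
    (C : ℝ)
    (hbound : ∃ δ : ℝ, 0 < δ ∧ ∀ t : ℝ, 0 ≤ t → t ≤ δ →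
      ‖(NormedSpace.exp ((Complex.I * t) • H) * A *
          NormedSpace.exp ((-(Complex.I * t)) • H)) * B -
        B * (NormedSpace.exp ((Complex.I * t) • H) * A *
          NormedSpace.exp ((-(Complex.I * t)) • H))‖ ≤ C * t) :
    ‖H y x‖ ≤ ‖(H * A - A * H) * B - B * (H * A - A * H)‖ ∧
      ‖H y x‖ ≤ C := by
  set K : Matrix n n ℂ := (H * A - A * H) * B - B * (H * A - A * H) with hKdef
  -- entry computation
  have hKyx : K y x = -(H y x) := by
    subst hA hB
    simp [hKdef, Matrix.sub_apply, Matrix.mul_apply, Matrix.single,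
      hxy, hxy.symm, Finset.sum_ite_eq, Finset.sum_ite_eq']
  have part1 : ‖H y x‖ ≤ ‖K‖ := by
    have := entry_abs_le_l2_opNorm' K y x
    rwa [hKyx, norm_neg] at this
  refine ⟨part1, ?_⟩
  -- part 2
  set M : Matrix n n ℂ := Complex.I • H with hM
  have hexp : (exp : Matrix n n ℂ → Matrix n n ℂ) = exp := rfl
  have hsm1 : ∀ t : ℝ, (Complex.I * (t:ℂ)) • H = t • M := by
    intro t
    rw [mul_comm, mul_smul, hM, ← Complex.coe_algebraMap, algebraMap_smul]
  have hsm2 : ∀ t : ℝ, (-(Complex.I * (t:ℂ))) • H = t • (-M) := by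
    intro t
    simp only [neg_smul, hsm1 t, smul_neg]
  set F : ℝ → Matrix n n ℂ := fun t =>
    (exp (t • M) * A * exp (t • (-M))) * B - B * (exp (t • M) * A * exp (t • (-M)))
    with hFdef
  have hU : HasDerivAt (fun t : ℝ => exp (t • M)) M 0 := by
    simpa only [zero_smul, exp_zero, one_mul] using hasDerivAt_exp_smul_const (𝕂 := ℝ) M (0 : ℝ)
  have hV : HasDerivAt (fun t : ℝ => exp (t • (-M))) (-M) 0 := by
    simpa only [zero_smul, exp_zero, one_mul] using hasDerivAt_exp_smul_const (𝕂 := ℝ) (-M) (0 : ℝ)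
  have hg : HasDerivAt (fun t : ℝ => exp (t • M) * A * exp (t • (-M)))
      (M * A - A * M) 0 := by
    have h := (hU.mul_const A).mul hV
    simp only [zero_smul, exp_zero, mul_one, one_mul] at h
    rw [show M * A - A * M = M * A + A * -M by noncomm_ring]
    exact h
  set L : Matrix n n ℂ := (M * A - A * M) * B - B * (M * A - A * M) with hLdef
  have hF : HasDerivAt F L 0 := (hg.mul_const B).sub (hg.const_mul B)
  have hLK : L = Complex.I • K := by
    rw [hLdef, hKdef, hM]
    simp only [Matrix.smul_mul, Matrix.mul_smul, smul_sub, Matrix.sub_mul, Matrix.mul_sub]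
  have hLnorm : ‖L‖ = ‖K‖ := by
    rw [hLK, norm_smul, Complex.norm_I, one_mul]
  have hF0 : F 0 = 0 := by
    have hAB : A * B = 0 := by
      rw [hA, hB]; simp [hxy]
    have hBA : B * A = 0 := by
      rw [hA, hB]; simp [hxy.symm]
    simp [hFdef, hAB, hBA]
  obtain ⟨δ, hδ, hb⟩ := hbound
  have hslope : Filter.Tendsto (slope F 0) (nhdsWithin 0 (Set.Ioi 0)) (nhds L) :=
    (hasDerivAt_iff_tendsto_slope.mp hF).mono_left
      (nhdsWithin_mono 0 (fun t ht => Set.mem_compl_singleton_iff.mpr (ne_of_gt ht)))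
  have hnorm : Filter.Tendsto (fun t => ‖slope F 0 t‖) (nhdsWithin 0 (Set.Ioi 0)) (nhds ‖L‖) :=
    hslope.norm
  have hev : ∀ᶠ t in nhdsWithin (0:ℝ) (Set.Ioi 0), ‖slope F 0 t‖ ≤ C := by
    filter_upwards [Ioc_mem_nhdsGT_of_mem (Set.mem_Ico.mpr ⟨le_refl 0, hδ⟩)] with t ht
    have ht0 : 0 < t := ht.1
    have hFt : ‖F t‖ ≤ C * t := by
      have := hb t ht0.le ht.2
      have e1 : (Complex.I * (t:ℂ)) • H = t • M := hsm1 t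
      have e2 : (-(Complex.I * (t:ℂ))) • H = t • (-M) := hsm2 t
      rw [e1, e2, ← hexp] at this
      exact this
    have : slope F 0 t = t⁻¹ • F t := by
      rw [slope_def_module, hF0, sub_zero, sub_zero]
    rw [this, norm_smul, Real.norm_eq_abs, abs_of_pos (inv_pos.mpr ht0)]
    calc t⁻¹ * ‖F t‖ ≤ t⁻¹ * (C * t) := by
          exact mul_le_mul_of_nonneg_left hFt (inv_pos.mpr ht0).le
      _ = C := by field_simp
  have hLC : ‖L‖ ≤ C := le_of_tendsto hnorm hev
  calc ‖H y x‖ ≤ ‖K‖ := part1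
    _ = ‖L‖ := hLnorm.symm
    _ ≤ C := hLC
end
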